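/- arXiv:2305.10021 — 2 statements merged into one kernel-verified Lean document; each statement's English description precedes it below -/
import Mathlib

section
/- Given a program P and its well-founded model W, the residual program R(P) — obtained from P by deleting every rule whose body is false w.r.t. W and removing from remaining rule bodies all literals true w.r.t. W — has exactly the same answer sets as P: AS(P) = AS(R(P)). -/
inductive Lit (α : Type) where
  | pos (a : α) : Lit α
  | neg (a : α) : Lit α

def Lit.compl {α : Type} : Lit α → Lit α
  | .pos a => .neg a
  | .neg a => .pos a

/-- A normal rule: an atom head and a body of literals. -/
structure Rule (α : Type) where
  head : α
  body : Set (Lit α)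

def posBody {α : Type} (r : Rule α) : Set α := {a | Lit.pos a ∈ r.body}
def negBody {α : Type} (r : Rule α) : Set α := {a | Lit.neg a ∈ r.body}

/-- `M'` is a model of the Gelfond–Lifschitz reduct `P^M`
(`M`, `M'` are sets of true atoms; the reduct keeps the rules whose negative
body is false in `M` and deletes their negative literals). -/
def modelsReduct {α : Type} (P : Set (Rule α)) (M M' : Set α) : Prop :=
  ∀ r ∈ P, (∀ a ∈ negBody r, a ∉ M) → posBody r ⊆ M' → r.head ∈ M'

/-- `M` is an answer set of `P`: `M` is a minimal model of the reduct `P^M`. -/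
def isAnswerSet {α : Type} (P : Set (Rule α)) (M : Set α) : Prop :=
  modelsReduct P M M ∧ ∀ M' ⊂ M, ¬ modelsReduct P M M'

def bodyFalse {α : Type} (I : Set (Lit α)) (B : Set (Lit α)) : Prop :=
  ∃ l ∈ B, l.compl ∈ I

def unfounded {α : Type} (P : Set (Rule α)) (I : Set (Lit α)) (U : Set α) : Prop :=
  ∀ r ∈ P, r.head ∈ U → bodyFalse I r.body ∨ ∃ a ∈ U, Lit.pos a ∈ r.body

def TP {α : Type} (P : Set (Rule α)) (I : Set (Lit α)) : Set α :=
  {a | ∃ r ∈ P, r.head = a ∧ r.body ⊆ I}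

def GUS {α : Type} (P : Set (Rule α)) (I : Set (Lit α)) : Set α :=
  ⋃₀ {U | unfounded P I U}

/-- The well-founded operator `W_P(I) = T_P(I) ∪ ¬U_P(I)`. -/
def WP {α : Type} (P : Set (Rule α)) (I : Set (Lit α)) : Set (Lit α) :=
  (Lit.pos '' TP P I) ∪ (Lit.neg '' GUS P I)

/-- `W` is the well-founded model of `P`: the least fixed point of `W_P`. -/
def isWFModel {α : Type} (P : Set (Rule α)) (W : Set (Lit α)) : Prop :=
  WP P W = W ∧ ∀ I, WP P I = I → W ⊆ I

/-- The set of literals made true by a total interpretation given by its true atoms. -/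
def litsOf {α : Type} (M : Set α) : Set (Lit α) :=
  (Lit.pos '' M) ∪ (Lit.neg '' Mᶜ)

/-- The residualProg program `R(P)` w.r.t. the well-founded model `W`:
rules with a false body w.r.t. `W` are removed, and literals true in `W` are
deleted from the remaining bodies. -/
def residualProg {α : Type} (P : Set (Rule α)) (W : Set (Lit α)) : Set (Rule α) :=
  {r' | ∃ r ∈ P, ¬ bodyFalse W r.body ∧ r' = ⟨r.head, {l | l ∈ r.body ∧ l ∉ W}⟩}

/-!
Every answer set `M` of `P` or of `R(P)` contains `W`. For `P` this holds because the literals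
of `M` form a prefixed point of `W_P`; for `R(P)` it follows by Knaster–Tarski induction, using
that `W` is consistent. Once `W` is true in `M`, a rule whose body is false in `W` never fires in
the reduct w.r.t. `M`, and deleting literals true in `W` from a body does not change whether the
rule fires on any `M' ⊆ M` that contains the positive part of `W`. Every model `M'` of `P^M`
contains that positive part, since it is derived by rules whose bodies lie in `W`.
-/

@[simp] lemma Lit.compl_compl {α : Type} (l : Lit α) : l.compl.compl = l := by cases l <;> rfl

section

variable {α : Type}

@[simp] lemma pos_mem_litsOf {M : Set α} {a : α} : Lit.pos a ∈ litsOf M ↔ a ∈ M := by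
  simp [litsOf]

@[simp] lemma neg_mem_litsOf {M : Set α} {a : α} : Lit.neg a ∈ litsOf M ↔ a ∉ M := by
  simp [litsOf]

lemma bodyFalse.mono {I J : Set (Lit α)} {B : Set (Lit α)} (hB : bodyFalse I B) (h : I ⊆ J) :
    bodyFalse J B :=
  let ⟨l, hl, hc⟩ := hB
  ⟨l, hl, h hc⟩

lemma not_bodyFalse_litsOf {M M' : Set α} {r : Rule α} (hM' : M' ⊆ M)
    (hneg : ∀ a ∈ negBody r, a ∉ M) (hpos : posBody r ⊆ M') :
    ¬ bodyFalse (litsOf M) r.body := by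
  rintro ⟨(a | a), ha, hc⟩
  · exact neg_mem_litsOf.1 hc (hM' (hpos ha))
  · exact hneg a ha (pos_mem_litsOf.1 hc)

lemma unfounded.mono {P : Set (Rule α)} {I J : Set (Lit α)} {U : Set α}
    (hU : unfounded P I U) (h : I ⊆ J) : unfounded P J U :=
  fun r hr hhead => (hU r hr hhead).imp_left (·.mono h)

lemma TP_mono (P : Set (Rule α)) : Monotone (TP P) :=
  fun _ _ h _ ⟨r, hr, hhead, hbody⟩ => ⟨r, hr, hhead, hbody.trans h⟩

lemma GUS_mono (P : Set (Rule α)) : Monotone (GUS P) :=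
  fun _ _ h _ ⟨U, hU, haU⟩ => ⟨U, hU.mono h, haU⟩

lemma WP_mono (P : Set (Rule α)) : Monotone (WP P) :=
  fun _ _ h => Set.union_subset_union (Set.image_mono (TP_mono P h))
    (Set.image_mono (GUS_mono P h))

@[simp] lemma pos_mem_WP {P : Set (Rule α)} {I : Set (Lit α)} {a : α} :
    Lit.pos a ∈ WP P I ↔ a ∈ TP P I := by
  simp [WP]

@[simp] lemma neg_mem_WP {P : Set (Rule α)} {I : Set (Lit α)} {a : α} :
    Lit.neg a ∈ WP P I ↔ a ∈ GUS P I := by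
  simp [WP]

lemma isAnswerSet.not_mem_of_modelsReduct_diff {P : Set (Rule α)} {M U : Set α} {a : α}
    (hM : isAnswerSet P M) (hU : modelsReduct P M (M \ U)) (ha : a ∈ U) : a ∉ M :=
  fun haM => hM.2 _ (Set.sdiff_ssubset_left_iff.2 ⟨a, haM, ha⟩) hU

lemma WP_litsOf_subset {P : Set (Rule α)} {M : Set α} (hM : isAnswerSet P M) :
    WP P (litsOf M) ⊆ litsOf M := by
  rintro (a | a) hl
  · obtain ⟨r, hr, rfl, hbody⟩ := pos_mem_WP.1 hl
    exact pos_mem_litsOf.2 (hM.1 r hr (fun b hb => neg_mem_litsOf.1 (hbody hb))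
      (fun b hb => pos_mem_litsOf.1 (hbody hb)))
  · obtain ⟨U, hU, haU⟩ := neg_mem_WP.1 hl
    refine neg_mem_litsOf.2 (hM.not_mem_of_modelsReduct_diff (fun r hr hneg hpos => ?_) haU)
    refine ⟨hM.1 r hr hneg (hpos.trans Set.sdiff_subset), fun hhead => ?_⟩
    rcases hU r hr hhead with hfalse | ⟨b, hbU, hb⟩
    · exact not_bodyFalse_litsOf Set.sdiff_subset hneg hpos hfalse
    · exact (hpos hb).2 hbU

lemma modelsReduct_residualProg_iff {P : Set (Rule α)} {W : Set (Lit α)} {M M' : Set α} :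
    modelsReduct (residualProg P W) M M' ↔
      ∀ r ∈ P, ¬ bodyFalse W r.body → (∀ a ∈ negBody r, Lit.neg a ∉ W → a ∉ M) →
        (∀ a ∈ posBody r, Lit.pos a ∉ W → a ∈ M') → r.head ∈ M' := by
  constructor
  · intro h r hr hnf hneg hpos
    exact h ⟨r.head, {l | l ∈ r.body ∧ l ∉ W}⟩ ⟨r, hr, hnf, rfl⟩
      (fun a ha => hneg a ha.1 ha.2) (fun a ha => hpos a ha.1 ha.2)
  · rintro h _ ⟨r, hr, hnf, rfl⟩ hneg hpos
    exact h r hr hnf (fun a ha haW => hneg a ⟨ha, haW⟩) (fun a ha haW => hpos ⟨ha, haW⟩)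

end

namespace isWFModel

variable {α : Type} {P : Set (Rule α)} {W : Set (Lit α)}

lemma subset_of_WP_subset (hW : isWFModel P W) {S : Set (Lit α)} (hS : WP P S ⊆ S) :
    W ⊆ S :=
  let f : Set (Lit α) →o Set (Lit α) := ⟨WP P, WP_mono P⟩
  (hW.2 _ f.map_lfp).trans (OrderHom.lfp_le f hS)

lemma subset_of_WP_inter_subset (hW : isWFModel P W) {S : Set (Lit α)}
    (hS : WP P (W ∩ S) ⊆ S) : W ⊆ S := by
  have hpre : WP P (W ∩ S) ⊆ W ∩ S :=
    Set.subset_inter ((WP_mono P Set.inter_subset_left).trans hW.1.le) hS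
  exact (hW.subset_of_WP_subset hpre).trans Set.inter_subset_right

lemma neg_mem_iff (hW : isWFModel P W) {a : α} : Lit.neg a ∈ W ↔ a ∈ GUS P W := by
  conv_lhs => rw [← hW.1]
  exact neg_mem_WP

lemma pos_induction (hW : isWFModel P W) {A : Set α}
    (h : ∀ r ∈ P, r.body ⊆ W → posBody r ⊆ A → r.head ∈ A) {a : α} (ha : Lit.pos a ∈ W) :
    a ∈ A := by
  refine hW.subset_of_WP_inter_subset (S := {l | ∀ b, l = .pos b → b ∈ A}) ?_ ha a rfl
  rintro (a | a) hl b ⟨⟩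
  obtain ⟨r, hr, rfl, hbody⟩ := pos_mem_WP.1 hl
  exact h r hr (hbody.trans Set.inter_subset_left) fun c hc => (hbody hc).2 c rfl

lemma not_mem_of_unfounded (hW : isWFModel P W) {I : Set (Lit α)} {U : Set α}
    (hI : ∀ l ∈ I, l.compl ∉ W) (hU : unfounded P I U) {a : α} (ha : Lit.pos a ∈ W) :
    a ∉ U :=
  hW.pos_induction (A := Uᶜ) (fun r hr hbody hpos hhead => by
    rcases hU r hr hhead with ⟨l, hl, hc⟩ | ⟨b, hbU, hb⟩
    · exact hI _ hc (by rw [Lit.compl_compl]; exact hbody hl)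
    · exact hpos hb hbU) ha

lemma compl_not_mem (hW : isWFModel P W) {l : Lit α} (hl : l ∈ W) : l.compl ∉ W := by
  refine hW.subset_of_WP_inter_subset (S := {l | l.compl ∉ W}) ?_ hl
  rintro (a | a) hl
  · obtain ⟨r, hr, rfl, hbody⟩ := pos_mem_WP.1 hl
    rintro hneg
    obtain ⟨U, hU, hhead⟩ := hW.neg_mem_iff.1 hneg
    rcases hU r hr hhead with ⟨l, hl, hc⟩ | ⟨b, hbU, hb⟩
    · exact (hbody hl).2 hc
    · exact (hbody hb).2 (hW.neg_mem_iff.2 ⟨U, hU, hbU⟩)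
  · obtain ⟨U, hU, haU⟩ := neg_mem_WP.1 hl
    exact fun ha => hW.not_mem_of_unfounded (fun l hl => hl.2) hU ha haU

lemma subset_litsOf_of_isAnswerSet (hW : isWFModel P W) {M : Set α} (hM : isAnswerSet P M) :
    W ⊆ litsOf M :=
  hW.subset_of_WP_subset (WP_litsOf_subset hM)

lemma subset_litsOf_of_isAnswerSet_residualProg (hW : isWFModel P W) {M : Set α}
    (hM : isAnswerSet (residualProg P W) M) : W ⊆ litsOf M := by
  have hmodel := modelsReduct_residualProg_iff.1 hM.1
  apply hW.subset_of_WP_inter_subset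
  rintro (a | a) hl
  · obtain ⟨r, hr, rfl, hbody⟩ := pos_mem_WP.1 hl
    have hbW : r.body ⊆ W := hbody.trans Set.inter_subset_left
    have hnf : ¬ bodyFalse W r.body := fun ⟨l, hl, hc⟩ => hW.compl_not_mem (hbW hl) hc
    exact pos_mem_litsOf.2 (hmodel r hr hnf (fun b hb hbW' => absurd (hbW hb) hbW')
      (fun b hb hbW' => absurd (hbW hb) hbW'))
  · obtain ⟨U, hU, haU⟩ := neg_mem_WP.1 hl
    refine neg_mem_litsOf.2 (hM.not_mem_of_modelsReduct_diff
      (modelsReduct_residualProg_iff.2 fun r hr hnf hneg hpos => ?_) haU)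
    refine ⟨hmodel r hr hnf hneg fun b hb hbW => (hpos b hb hbW).1, fun hhead => ?_⟩
    rcases hU r hr hhead with hfalse | ⟨b, hbU, hb⟩
    · exact hnf (hfalse.mono Set.inter_subset_left)
    · by_cases hbW : Lit.pos b ∈ W
      · exact hW.not_mem_of_unfounded (fun l hl => hW.compl_not_mem hl.1) hU hbW hbU
      · exact (hpos b hb hbW).2 hbU

lemma modelsReduct_residualProg_iff_of_subset_litsOf (hW : isWFModel P W) {M M' : Set α}
    (hWM : W ⊆ litsOf M) (hM' : M' ⊆ M) :
    modelsReduct (residualProg P W) M M' ↔ modelsReduct P M M' := by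
  rw [modelsReduct_residualProg_iff]
  constructor
  · intro h r hr hneg hpos
    exact h r hr (fun hfalse => not_bodyFalse_litsOf hM' hneg hpos (hfalse.mono hWM))
      (fun a ha _ => hneg a ha) (fun a ha _ => hpos ha)
  · intro h r hr _ hneg hpos
    have hposW : ∀ a, Lit.pos a ∈ W → a ∈ M' := fun a =>
      hW.pos_induction fun r hr hbody hpos' =>
        h r hr (fun b hb => neg_mem_litsOf.1 (hWM (hbody hb))) hpos'
    refine h r hr (fun a ha => ?_) (fun a ha => ?_)
    · by_cases haW : Lit.neg a ∈ W
      · exact neg_mem_litsOf.1 (hWM haW)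
      · exact hneg a ha haW
    · by_cases haW : Lit.pos a ∈ W
      · exact hposW a haW
      · exact hpos a ha haW

lemma isAnswerSet_residualProg_iff_of_subset_litsOf (hW : isWFModel P W) {M : Set α}
    (hWM : W ⊆ litsOf M) : isAnswerSet (residualProg P W) M ↔ isAnswerSet P M :=
  and_congr (hW.modelsReduct_residualProg_iff_of_subset_litsOf hWM subset_rfl)
    (forall₂_congr fun _ hM' =>
      not_congr (hW.modelsReduct_residualProg_iff_of_subset_litsOf hWM hM'.subset))

end isWFModel

/-- The residualProg program w.r.t. the well-founded model has exactly the same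
answer sets as the original program: `AS(P) = AS(R(P))`. -/
theorem answerSets_residual_eq {α : Type} (P : Set (Rule α)) (W : Set (Lit α))
    (hW : isWFModel P W) :
    ∀ M : Set α, isAnswerSet P M ↔ isAnswerSet (residualProg P W) M := by
  intro M
  constructor
  · intro hM
    exact (hW.isAnswerSet_residualProg_iff_of_subset_litsOf
      (hW.subset_litsOf_of_isAnswerSet hM)).2 hM
  · intro hM
    exact (hW.isAnswerSet_residualProg_iff_of_subset_litsOf
      (hW.subset_litsOf_of_isAnswerSet_residualProg hM)).1 hM
end

section
/- The well-founded model of a program P is a subset of every answer set of P (viewing the answer set M as the set of literals it makes true). -/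
/-- The well-founded model of `P` is a subset of every answer set of `P`
(viewing the answer set `M` as the set of literals it makes true). -/
theorem wfModel_subset_answerSet {α : Type} (P : Set (Rule α)) (W : Set (Lit α))
    (hW : isWFModel P W) (M : Set α) (hM : isAnswerSet P M) :
    W ⊆ litsOf M := by
  obtain ⟨hmod, hmin⟩ := hM
  have key : ∀ M' ⊆ M, modelsReduct P M M' → M ⊆ M' := by
    intro M' hsub hm
    by_contra h
    exact hmin M' ⟨hsub, h⟩ hm
  have hposM : ∀ a, Lit.pos a ∈ litsOf M → a ∈ M := by
    intro a ha
    rcases ha with ⟨b, hb, h⟩ | ⟨b, hb, h⟩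
    · cases h; exact hb
    · cases h
  have hnegM : ∀ a, Lit.neg a ∈ litsOf M → a ∉ M := by
    intro a ha
    rcases ha with ⟨b, hb, h⟩ | ⟨b, hb, h⟩
    · cases h
    · cases h; exact hb
  have hTP : TP P (litsOf M) = M := by
    have hsub : TP P (litsOf M) ⊆ M := by
      rintro a ⟨r, hr, rfl, hb⟩
      exact hmod r hr (fun c hc => hnegM c (hb hc)) (fun c hc => hposM c (hb hc))
    refine Set.Subset.antisymm hsub ?_
    apply key _ hsub
    intro r hr hneg hpos
    refine ⟨r, hr, rfl, ?_⟩
    intro l hl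
    cases l with
    | pos a => exact Or.inl ⟨a, hsub (hpos hl), rfl⟩
    | neg a => exact Or.inr ⟨a, hneg a hl, rfl⟩
  have hGUS : GUS P (litsOf M) = Mᶜ := by
    apply Set.Subset.antisymm
    · rintro a ⟨U, hU, haU⟩
      have hM' : M ⊆ M \ U := by
        apply key _ Set.diff_subset
        intro r hr hneg hpos
        have hhead : r.head ∈ M := hmod r hr hneg (fun c hc => (hpos hc).1)
        refine ⟨hhead, fun hhU => ?_⟩
        rcases hU r hr hhU with ⟨l, hl, hcl⟩ | ⟨b, hbU, hb⟩
        · cases l with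
          | pos c => exact hnegM c hcl ((hpos hl).1)
          | neg c => exact hneg c hl (hposM c hcl)
        · exact (hpos hb).2 hbU
      intro haM
      exact (hM' haM).2 haU
    · intro a ha
      refine ⟨Mᶜ, ?_, ha⟩
      intro r hr hhead
      by_contra hcon
      push_neg at hcon
      obtain ⟨hnbf, hnu⟩ := hcon
      apply hhead
      apply hmod r hr
      · intro c hc hcM
        exact hnbf ⟨Lit.neg c, hc, Or.inl ⟨c, hcM, rfl⟩⟩
      · intro c hc
        by_contra hcM
        exact hnu c hcM hc
  have hfix : WP P (litsOf M) = litsOf M := by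
    rw [WP, hTP, hGUS, litsOf]
  exact hW.2 _ hfix
end
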